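/- For every even ℓ ≥ 2, the word δ = x₁x₂⋯x_ℓ x₁ x_ℓ x₂ x_{ℓ−1} x₃ x_{ℓ−2} ⋯ x_{ℓ/2} x_{ℓ/2+1} has locality number 2, while every marking sequence obtained by the left-to-right greedy strategy (always mark the unmarked letter whose leftmost occurrence is leftmost) achieves marking number at least ℓ/2. Hence the approximation ratio of this greedy strategy on δ is at least ℓ/4. -/

import Mathlib

noncomputable section

attribute [local instance] Classical.propDecidable

variable {X : Type*} [DecidableEq X]

/-- Number of maximal blocks of `true`s in a list of booleans, where the first
argument is the preceding symbol. -/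
def blocksAux : Bool → List Bool → ℕ
  | _, [] => 0
  | prev, b :: rest => (if b = true ∧ prev = false then 1 else 0) + blocksAux b rest

/-- Number of maximal contiguous blocks of positions of `w` whose letter lies in `S`. -/
def blockCount (w : List X) (S : List X) : ℕ :=
  blocksAux false (w.map (fun x => decide (x ∈ S)))

/-- `σ` is a marking sequence for `w`: an enumeration, without repetition,
of the alphabet of `w`. -/
def IsMarkingSeq (w σ : List X) : Prop := σ.Nodup ∧ σ.toFinset = w.toFinset

/-- The marking number of the marking sequence `σ` on `w`: the maximum, over all
stages `i`, of the number of maximal contiguous marked blocks after marking the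
first `i` letters of `σ`. -/
def markingNumber (w σ : List X) : ℕ :=
  Finset.sup (Finset.range (σ.length + 1)) (fun i => blockCount w (σ.take i))

/-- The locality number of `w`: the minimum marking number over all marking
sequences for `w`. -/
def locality (w : List X) : ℕ :=
  sInf {n | ∃ σ, IsMarkingSeq w σ ∧ markingNumber w σ = n}

/-- `σ` is a marking sequence for `w` produced by the left-to-right greedy
strategy: at each step the chosen letter is an unmarked letter whose leftmost
occurrence in `w` is leftmost among all unmarked letters. -/
def IsLRGreedy (w σ : List X) : Prop :=
  IsMarkingSeq w σ ∧
    ∀ i c, σ[i]? = some c →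
      ∀ y ∈ w, y ∉ σ.take i → w.idxOf c ≤ w.idxOf y

/-- The word `δ = x₁x₂⋯x_ℓ x₁ x_ℓ x₂ x_{ℓ-1} x₃ x_{ℓ-2} ⋯ x_{ℓ/2} x_{ℓ/2+1}` over
the distinct letters `1, ..., ℓ`. -/
def deltaWord (ℓ : ℕ) : List ℕ :=
  List.range' 1 ℓ ++ (List.range' 1 (ℓ / 2)).flatMap (fun j => [j, ℓ + 1 - j])

/-! Write `ℓ = 2m`. Marking the letters in the order of the second half `x₁ x_ℓ x₂ x_{ℓ-1} ⋯` of δ,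
the marked letters are at every stage a prefix and a suffix of `x₁ ⋯ x_ℓ`, followed by a prefix of
the second half; the suffix and that prefix are adjacent in δ, so there are at most two blocks. No
marking sequence does better, because the first marked letter occurs twice in δ with another letter
in between. The greedy strategy, on the other hand, is forced to mark `x₁, …, x_ℓ` in this order,
and once `x₁, …, x_m` are marked the second half alternates between marked and unmarked letters,
giving `m` blocks. -/

theorem blocksAux_le_blocksAux_false (p : Bool) (l : List Bool) :
    blocksAux p l ≤ blocksAux false l := by
  cases l with
  | nil => rfl
  | cons b l => cases p <;> cases b <;> simp [blocksAux]

theorem blocksAux_false_le_blocksAux_true_add_one (l : List Bool) :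
    blocksAux false l ≤ blocksAux true l + 1 := by
  cases l with
  | nil => simp [blocksAux]
  | cons b l => cases b <;> simp [blocksAux, Nat.add_comm]

theorem blocksAux_le_of_sublist {l₁ l₂ : List Bool} (h : l₁.Sublist l₂) (p : Bool) :
    blocksAux p l₁ ≤ blocksAux p l₂ := by
  induction h generalizing p with
  | slnil => rfl
  | @cons l₁ l₂ a _ ih =>
    have := ih a
    have := blocksAux_le_blocksAux_false p l₁
    have := blocksAux_false_le_blocksAux_true_add_one l₁
    cases p <;> cases a <;> simp [blocksAux] at * <;> omega
  | cons_cons a _ ih => simpa only [blocksAux] using Nat.add_le_add_left (ih a) _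

theorem blocksAux_replicate_false_append (p : Bool) (n : ℕ) (l : List Bool) :
    blocksAux p (List.replicate n false ++ l) ≤ blocksAux false l := by
  induction n generalizing p with
  | zero => exact blocksAux_le_blocksAux_false p l
  | succ n ih => simpa [List.replicate_succ, blocksAux] using ih false

theorem blocksAux_true_replicate_true_append (n : ℕ) (l : List Bool) :
    blocksAux true (List.replicate n true ++ l) = blocksAux true l := by
  induction n with
  | zero => rfl
  | succ n ih => simpa [List.replicate_succ, blocksAux] using ih

theorem blocksAux_replicate_true_append (p : Bool) (n : ℕ) (l : List Bool) :
    blocksAux p (List.replicate n true ++ l) ≤ blocksAux true l + 1 := by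
  cases n with
  | zero =>
    exact (blocksAux_le_blocksAux_false p l).trans (blocksAux_false_le_blocksAux_true_add_one l)
  | succ n =>
    have := blocksAux_true_replicate_true_append n l
    cases p <;> simp [List.replicate_succ, blocksAux] <;> omega

theorem blocksAux_two_intervals_le_two (p : Bool) (a s u t : ℕ) :
    blocksAux p (List.replicate a true ++ List.replicate s false ++ List.replicate u true ++
      List.replicate t false) ≤ 2 := by
  have h₁ := blocksAux_replicate_true_append p a
    (List.replicate s false ++ List.replicate u true ++ List.replicate t false)
  have h₂ := blocksAux_replicate_false_append true s
    (List.replicate u true ++ List.replicate t false)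
  have h₃ := blocksAux_replicate_true_append false u (List.replicate t false)
  have h₄ := blocksAux_replicate_false_append true t []
  simp only [List.append_assoc, List.append_nil] at *
  simp only [blocksAux] at h₄
  omega

theorem blocksAux_flatten_replicate (m : ℕ) :
    blocksAux false (List.replicate m [true, false]).flatten = m := by
  induction m with
  | zero => rfl
  | succ m ih => simp [List.replicate_succ, blocksAux, ih, Nat.add_comm]

theorem blockCount_le_of_sublist {w₁ w₂ : List X} (h : w₁.Sublist w₂) (S : List X) :
    blockCount w₁ S ≤ blockCount w₂ S :=
  blocksAux_le_of_sublist (h.map _) false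

theorem two_le_blockCount_singleton {w : List X} {x y : X} (h : [x, y, x].Sublist w)
    (hyx : y ≠ x) : 2 ≤ blockCount w [x] := by
  refine le_trans ?_ (blockCount_le_of_sublist h [x])
  simp [blockCount, blocksAux, hyx]

theorem blockCount_take_le_markingNumber (w σ : List X) {i : ℕ} (hi : i ≤ σ.length) :
    blockCount w (σ.take i) ≤ markingNumber w σ :=
  Finset.le_sup (f := fun i => blockCount w (σ.take i)) (Finset.mem_range_succ_iff.mpr hi)

theorem markingNumber_le {w σ : List X} {n : ℕ}
    (h : ∀ i ≤ σ.length, blockCount w (σ.take i) ≤ n) : markingNumber w σ ≤ n :=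
  Finset.sup_le fun i hi => h i (Finset.mem_range_succ_iff.mp hi)

theorem locality_eq {w σ : List X} {n : ℕ} (hσ : IsMarkingSeq w σ) (hle : markingNumber w σ ≤ n)
    (hge : ∀ τ, IsMarkingSeq w τ → n ≤ markingNumber w τ) : locality w = n := by
  have hn : markingNumber w σ = n := le_antisymm hle (hge σ hσ)
  refine le_antisymm (Nat.sInf_le ⟨σ, hσ, hn⟩) ?_
  exact le_csInf ⟨n, σ, hσ, hn⟩ fun _ ⟨τ, hτ, hτn⟩ => hτn ▸ hge τ hτ

theorem IsMarkingSeq.mem_iff {w σ : List X} (h : IsMarkingSeq w σ) {x : X} : x ∈ σ ↔ x ∈ w := by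
  rw [← List.mem_toFinset, h.2, List.mem_toFinset]

theorem IsLRGreedy.pairwise_idxOf_lt {w σ : List X} (h : IsLRGreedy w σ) :
    σ.Pairwise fun x y => w.idxOf x < w.idxOf y := by
  obtain ⟨hσ, hgreedy⟩ := h
  rw [List.pairwise_iff_getElem]
  intro i j hi hj hij
  have hj_mem : σ[j] ∈ w := hσ.mem_iff.mp (List.getElem_mem hj)
  have hj_new : σ[j] ∉ σ.take i := by
    intro hmem
    obtain ⟨k, hk, hkj⟩ := List.getElem_of_mem hmem
    rw [List.length_take] at hk
    rw [List.getElem_take] at hkj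
    have := hσ.1.getElem_inj_iff.mp hkj
    omega
  have hne : σ[i] ≠ σ[j] := fun heq => absurd (hσ.1.getElem_inj_iff.mp heq) (by omega)
  refine lt_of_le_of_ne (hgreedy i σ[i] (List.getElem?_eq_getElem hi) σ[j] hj_mem hj_new) ?_
  exact fun heq => hne ((List.idxOf_inj (hσ.mem_iff.mp (List.getElem_mem hi))).mp heq)

theorem List.Nodup.map_decide_mem_take {L : List X} (hL : L.Nodup) (i : ℕ) :
    L.map (fun x => decide (x ∈ L.take i)) =
      List.replicate (min i L.length) true ++ List.replicate (L.length - i) false := by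
  conv_lhs => rw [← List.take_append_drop i L]
  rw [List.map_append]
  have hdisj := List.disjoint_take_drop hL (le_refl i)
  congr 1
  · rw [List.eq_replicate_iff]
    exact ⟨by simp, fun b hb => by obtain ⟨x, hx, rfl⟩ := List.mem_map.mp hb; simpa using hx⟩
  · rw [List.eq_replicate_iff]
    exact ⟨by simp, fun b hb => by
      obtain ⟨x, hx, rfl⟩ := List.mem_map.mp hb; simpa using fun h => hdisj h hx⟩

def deltaTail (ℓ : ℕ) : List ℕ :=
  (List.range' 1 (ℓ / 2)).flatMap (fun j => [j, ℓ + 1 - j])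

theorem deltaWord_eq (ℓ : ℕ) : deltaWord ℓ = List.range' 1 ℓ ++ deltaTail ℓ := rfl

def zigzag (ℓ p : ℕ) : ℕ := if p % 2 = 0 then p / 2 + 1 else ℓ - p / 2

theorem flatMap_range'_eq_map_zigzag (ℓ k : ℕ) :
    (List.range' 1 k).flatMap (fun j => [j, ℓ + 1 - j]) = (List.range (2 * k)).map (zigzag ℓ) := by
  induction k with
  | zero => rfl
  | succ k ih =>
    rw [List.range'_1_concat, List.flatMap_append, ih, show 2 * (k + 1) = 2 * k + 1 + 1 by ring,
      List.range_succ, List.range_succ]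
    simp [zigzag, Nat.add_comm 1 k]
    omega

theorem deltaTail_eq_map_zigzag (m : ℕ) :
    deltaTail (2 * m) = (List.range (2 * m)).map (zigzag (2 * m)) := by
  rw [deltaTail, Nat.mul_div_cancel_left m two_pos, flatMap_range'_eq_map_zigzag]

theorem mem_map_zigzag_range {ℓ i x : ℕ} (hi : i ≤ ℓ) :
    x ∈ (List.range i).map (zigzag ℓ) ↔ 1 ≤ x ∧ x ≤ ℓ ∧ (x ≤ (i + 1) / 2 ∨ ℓ - i / 2 < x) := by
  simp only [List.mem_map, List.mem_range, zigzag]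
  constructor
  · rintro ⟨p, hp, rfl⟩
    split_ifs <;> omega
  · rintro ⟨h1, h2, hx | hx⟩
    · exact ⟨2 * (x - 1), by omega, by rw [if_pos (by omega)]; omega⟩
    · exact ⟨2 * (ℓ - x) + 1, by omega, by rw [if_neg (by omega)]; omega⟩

theorem deltaTail_take (m i : ℕ) :
    (deltaTail (2 * m)).take i = (List.range (min i (2 * m))).map (zigzag (2 * m)) := by
  rw [deltaTail_eq_map_zigzag, ← List.map_take, List.take_range]

theorem mem_deltaTail {m x : ℕ} : x ∈ deltaTail (2 * m) ↔ 1 ≤ x ∧ x ≤ 2 * m := by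
  rw [deltaTail_eq_map_zigzag, mem_map_zigzag_range le_rfl]
  omega

theorem nodup_deltaTail (m : ℕ) : (deltaTail (2 * m)).Nodup := by
  rw [deltaTail_eq_map_zigzag]
  refine List.Nodup.map_on (fun p hp q hq hpq => ?_) List.nodup_range
  simp only [List.mem_range, zigzag] at hp hq hpq
  split_ifs at hpq <;> omega

theorem length_deltaTail (m : ℕ) : (deltaTail (2 * m)).length = 2 * m := by
  simp [deltaTail_eq_map_zigzag]

theorem mem_deltaWord {m x : ℕ} : x ∈ deltaWord (2 * m) ↔ 1 ≤ x ∧ x ≤ 2 * m := by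
  rw [deltaWord_eq, List.mem_append, mem_deltaTail, List.mem_range'_1]
  omega

theorem isMarkingSeq_deltaTail (m : ℕ) : IsMarkingSeq (deltaWord (2 * m)) (deltaTail (2 * m)) :=
  ⟨nodup_deltaTail m, by ext x; simp only [List.mem_toFinset, mem_deltaTail, mem_deltaWord]⟩

theorem map_range'_eq_two_intervals {n a c : ℕ} (hac : a + c ≤ n) {f : ℕ → Bool}
    (hf : ∀ x, 1 ≤ x → x ≤ n → (f x = true ↔ x ≤ a ∨ n - c < x)) :
    (List.range' 1 n).map f =
      List.replicate a true ++ List.replicate (n - a - c) false ++ List.replicate c true := by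
  obtain ⟨s, rfl⟩ : ∃ s, n = a + s + c := ⟨n - a - c, by omega⟩
  rw [← List.range'_append, ← List.range'_append]
  simp only [List.map_append, Nat.one_mul]
  rw [show a + s + c - a - c = s by omega]
  congr 1
  congr 1
  all_goals
    rw [List.eq_replicate_iff]
    refine ⟨by simp, fun b hb => ?_⟩
    obtain ⟨x, hx, rfl⟩ := List.mem_map.mp hb
    rw [List.mem_range'_1] at hx
    have := hf x (by omega) (by omega)
  · exact this.mpr (by omega)
  · exact Bool.eq_false_iff.mpr fun h => by have := this.mp h; omega
  · exact this.mpr (by omega)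

theorem markingNumber_deltaWord_deltaTail_le_two (m : ℕ) :
    markingNumber (deltaWord (2 * m)) (deltaTail (2 * m)) ≤ 2 := by
  refine markingNumber_le fun i hi => ?_
  rw [length_deltaTail] at hi
  have hmarked : ∀ x, 1 ≤ x → x ≤ 2 * m →
      (decide (x ∈ (deltaTail (2 * m)).take i) = true ↔ x ≤ (i + 1) / 2 ∨ 2 * m - i / 2 < x) := by
    intro x h₁ h₂
    rw [decide_eq_true_iff, deltaTail_take, Nat.min_eq_left hi, mem_map_zigzag_range hi]
    omega
  unfold blockCount
  rw [deltaWord_eq, List.map_append, (nodup_deltaTail m).map_decide_mem_take i,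
    map_range'_eq_two_intervals (by omega) hmarked]
  convert blocksAux_two_intervals_le_two false ((i + 1) / 2) (2 * m - (i + 1) / 2 - i / 2)
      (i / 2 + min i (deltaTail (2 * m)).length) ((deltaTail (2 * m)).length - i) using 2
  simp only [List.replicate_add, List.append_assoc]

theorem exists_triple_sublist_deltaWord {m x : ℕ} (hm : 0 < m) (hx : x ∈ deltaWord (2 * m)) :
    ∃ y, y ≠ x ∧ [x, y, x].Sublist (deltaWord (2 * m)) := by
  obtain ⟨t, ht⟩ : ∃ t, deltaTail (2 * m) = 1 :: t := by
    obtain ⟨n, hn⟩ : ∃ n, 2 * m = n + 1 := ⟨2 * m - 1, by omega⟩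
    rw [deltaTail_eq_map_zigzag, hn, List.range_succ_eq_map]
    exact ⟨_, rfl⟩
  have hx' := mem_deltaWord.mp hx
  rw [deltaWord_eq]
  by_cases hx1 : x = 1
  · subst hx1
    refine ⟨2, by omega, List.Sublist.append (l₁ := [1, 2]) ?_ ?_⟩
    · obtain ⟨n, hn⟩ : ∃ n, 2 * m = n + 2 := ⟨2 * m - 2, by omega⟩
      simp [hn, List.range'_succ]
    · simpa using mem_deltaTail.mpr hx'
  · refine ⟨1, Ne.symm hx1, List.Sublist.append (l₁ := [x]) ?_ ?_⟩
    · simp [List.mem_range'_1]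
      omega
    · have hxt : x ∈ 1 :: t := ht ▸ mem_deltaTail.mpr hx'
      rw [ht]
      exact (List.singleton_sublist.mpr ((List.mem_cons.mp hxt).resolve_left hx1)).cons_cons 1

theorem two_le_markingNumber_deltaWord {m : ℕ} (hm : 0 < m) {σ : List ℕ}
    (hσ : IsMarkingSeq (deltaWord (2 * m)) σ) : 2 ≤ markingNumber (deltaWord (2 * m)) σ := by
  cases σ with
  | nil =>
    have h1 : 1 ∈ deltaWord (2 * m) := mem_deltaWord.mpr (by omega)
    simp [← hσ.mem_iff] at h1
  | cons x τ =>
    obtain ⟨y, hyx, hsub⟩ := exists_triple_sublist_deltaWord hm (hσ.mem_iff.mp List.mem_cons_self)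
    calc 2 ≤ blockCount (deltaWord (2 * m)) [x] := two_le_blockCount_singleton hsub hyx
      _ = blockCount (deltaWord (2 * m)) ((x :: τ).take 1) := rfl
      _ ≤ _ := blockCount_take_le_markingNumber _ _ (by simp)

theorem idxOf_deltaWord {m x : ℕ} (h₁ : 1 ≤ x) (h₂ : x ≤ 2 * m) :
    (deltaWord (2 * m)).idxOf x = x - 1 := by
  have hidx := (List.nodup_range' (s := 1) (n := 2 * m)).idxOf_getElem (i := x - 1)
    (by simp; omega)
  rw [deltaWord_eq, List.idxOf_append_of_mem (List.mem_range'_1.mpr (by omega))]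
  simpa [Nat.add_sub_cancel' h₁] using hidx

theorem eq_range'_of_isLRGreedy_deltaWord {m : ℕ} {σ : List ℕ}
    (h : IsLRGreedy (deltaWord (2 * m)) σ) : σ = List.range' 1 (2 * m) := by
  have hmem : ∀ x, x ∈ σ ↔ 1 ≤ x ∧ x ≤ 2 * m := fun x => h.1.mem_iff.trans mem_deltaWord
  have hsorted : σ.Pairwise (· < ·) := h.pairwise_idxOf_lt.imp_of_mem fun hx hy hxy => by
    rw [idxOf_deltaWord ((hmem _).mp hx).1 ((hmem _).mp hx).2,
      idxOf_deltaWord ((hmem _).mp hy).1 ((hmem _).mp hy).2] at hxy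
    omega
  refine hsorted.eq_of_mem_iff List.pairwise_lt_range' fun x => ?_
  rw [hmem, List.mem_range'_1]
  omega

theorem blockCount_deltaTail_range' (m : ℕ) :
    blockCount (deltaTail (2 * m)) (List.range' 1 m) = m := by
  have hpair : ∀ j ∈ List.range' 1 m,
      [j, 2 * m + 1 - j].map (fun x => decide (x ∈ List.range' 1 m)) = [true, false] := by
    intro j hj
    rw [List.mem_range'_1] at hj
    simp [List.mem_range'_1]
    omega
  rw [blockCount, deltaTail, Nat.mul_div_cancel_left m two_pos, List.map_flatMap,
    List.flatMap_congr hpair, List.flatMap_def, List.map_const', List.length_range']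
  exact blocksAux_flatten_replicate m

theorem le_markingNumber_of_isLRGreedy_deltaWord {m : ℕ} {σ : List ℕ}
    (h : IsLRGreedy (deltaWord (2 * m)) σ) : m ≤ markingNumber (deltaWord (2 * m)) σ := by
  rw [eq_range'_of_isLRGreedy_deltaWord h]
  calc m = blockCount (deltaTail (2 * m)) (List.range' 1 m) := (blockCount_deltaTail_range' m).symm
    _ ≤ blockCount (deltaWord (2 * m)) (List.range' 1 m) :=
      blockCount_le_of_sublist (List.sublist_append_right _ _) _
    _ = blockCount (deltaWord (2 * m)) ((List.range' 1 (2 * m)).take m) := by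
      rw [List.take_range'_of_length_ge (by omega)]
    _ ≤ _ := blockCount_take_le_markingNumber _ _ (by simp; omega)

/-- For every even `ℓ ≥ 2`: `loc(δ) = 2`, every left-to-right greedy marking
sequence for `δ` has marking number at least `ℓ/2`, and hence the approximation
ratio of this greedy strategy on `δ` is at least `ℓ/4`. -/
theorem lr_greedy_bad (ℓ : ℕ) (h2 : 2 ≤ ℓ) (heven : Even ℓ) :
    locality (deltaWord ℓ) = 2 ∧
    (∀ σ, IsLRGreedy (deltaWord ℓ) σ → ℓ / 2 ≤ markingNumber (deltaWord ℓ) σ) ∧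
    (∀ σ, IsLRGreedy (deltaWord ℓ) σ →
      (ℓ : ℚ) / 4 ≤ (markingNumber (deltaWord ℓ) σ : ℚ) / (locality (deltaWord ℓ) : ℚ)) := by
  obtain ⟨m, rfl⟩ := heven
  rw [← two_mul] at h2 ⊢
  have hm : 0 < m := by omega
  have hloc : locality (deltaWord (2 * m)) = 2 :=
    locality_eq (isMarkingSeq_deltaTail m) (markingNumber_deltaWord_deltaTail_le_two m)
      fun τ hτ => two_le_markingNumber_deltaWord hm hτ
  rw [hloc, Nat.mul_div_cancel_left m two_pos]
  refine ⟨rfl, fun σ hσ => le_markingNumber_of_isLRGreedy_deltaWord hσ, fun σ hσ => ?_⟩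
  have hle : (m : ℚ) ≤ markingNumber (deltaWord (2 * m)) σ := by
    exact_mod_cast le_markingNumber_of_isLRGreedy_deltaWord hσ
  push_cast
  linarith
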